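/- Let μ ∈ {0,1}. Then S_μ(Q_μ) = inf{ S_μ(φ) : φ ∈ H¹(ℝ²)∖{0}, I_μ(φ) = 0 }. -/

import Mathlib

open MeasureTheory Real Filter
open scoped Topology ENNReal

noncomputable section

abbrev E2 : Type := EuclideanSpace ℝ (Fin 2)

/-- Squared `L²` norm. -/
def l2Sq (u : E2 → ℂ) : ℝ := ∫ x : E2, ‖u x‖ ^ 2

/-- Squared `L²` norm of the gradient. -/
def gradSq (u : E2 → ℂ) : ℝ := ∫ x : E2, ‖fderiv ℝ u x‖ ^ 2

/-- Membership in `H¹(ℝ²)`. -/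
def MemH1 (u : E2 → ℂ) : Prop :=
  MemLp u 2 volume ∧ Differentiable ℝ u ∧ MemLp (fun x => fderiv ℝ u x) 2 volume

/-- Integrability of all exponentials `e^{a|u|²} - 1`. -/
def ExpIntegrable (u : E2 → ℂ) : Prop :=
  ∀ a : ℝ, 0 < a → Integrable (fun x : E2 => Real.exp (a * ‖u x‖ ^ 2) - 1)

/-- The nonlinearity `f_μ`. -/
def fmu (μ : ℝ) (z : ℂ) : ℂ :=
  ((Real.exp (4 * π * ‖z‖ ^ 2) - 1 - 4 * π * μ * ‖z‖ ^ 2 : ℝ) : ℂ) * z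

/-- The potential `F_μ`. -/
def Fmu (μ : ℝ) (z : ℂ) : ℝ :=
  (Real.exp (4 * π * ‖z‖ ^ 2) - 1 - 4 * π * ‖z‖ ^ 2 - 8 * π ^ 2 * μ * ‖z‖ ^ 4) / (8 * π)

/-- `Re (z̄ f_μ(z))`. -/
def nlDensity (μ : ℝ) (z : ℂ) : ℝ :=
  (Real.exp (4 * π * ‖z‖ ^ 2) - 1 - 4 * π * μ * ‖z‖ ^ 2) * ‖z‖ ^ 2

/-- Energy. -/
def Emu (μ : ℝ) (u : E2 → ℂ) : ℝ := gradSq u / 2 - ∫ x : E2, Fmu μ (u x)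

/-- Action. -/
def Smu (μ : ℝ) (u : E2 → ℂ) : ℝ := Emu μ u + l2Sq u / 2

/-- The functional `P_μ`. -/
def Pmu (μ : ℝ) (u : E2 → ℂ) : ℝ := l2Sq u / 2 - ∫ x : E2, Fmu μ (u x)

/-- The virial functional `I_μ`. -/
def Imu (μ : ℝ) (u : E2 → ℂ) : ℝ :=
  gradSq u - ∫ x : E2, (nlDensity μ (u x) - 2 * Fmu μ (u x))

/-- Laplacian on `ℝ²` (sum of second directional derivatives). -/
def lap (v : E2 → ℂ) (x : E2) : ℂ :=
  ∑ i : Fin 2, fderiv ℝ (fun y => fderiv ℝ v y (EuclideanSpace.single i 1)) x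
      (EuclideanSpace.single i 1)

/-- `φ` is a (pointwise) solution to the elliptic equation `-Δφ + φ = f_μ(φ)`. -/
def IsEllipticSolution (μ : ℝ) (φ : E2 → ℂ) : Prop :=
  ∀ x, -lap φ x + φ x = fmu μ (φ x)

/-- Ground state for `-ΔQ + Q = f_μ(Q)`. -/
structure IsGroundState (μ : ℝ) (Q : E2 → ℂ) : Prop where
  mem : MemH1 Q
  expint : ExpIntegrable Q
  nonzero : ¬ Q =ᵐ[volume] (0 : E2 → ℂ)
  radial : ∀ x y : E2, ‖x‖ = ‖y‖ → Q x = Q y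
  solves : IsEllipticSolution μ Q
  minimal : ∀ φ : E2 → ℂ, MemH1 φ → ExpIntegrable φ → ¬ φ =ᵐ[volume] (0 : E2 → ℂ) →
    IsEllipticSolution μ φ → Smu μ Q ≤ Smu μ φ
  grad_pos : 0 < gradSq Q
  grad_lt_one : gradSq Q < 1

/-! Given `φ ≠ 0` with `I_μ(φ) = 0`, consider the dilations `φ_c = c φ(c ·)`, which keep `‖φ‖₂`
and multiply `‖∇φ‖₂²` by `c²`. Writing `F_μ(z) = g(4π|z|²)/(8π)` with
`g(y) = e^y - 1 - y - μy²/2`, the map `y ↦ g(y)/y²` is increasing, so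
`c⁻² ∫ F_μ(cφ)` lies below `c² ∫ F_μ(φ)` for `c ≤ 1` and above it for `c ≥ 1`; by the
intermediate value theorem some `φ_c` satisfies `P_μ(φ_c) = 0`, hence `S_μ(Q) ≤ S_μ(φ_c)`.
In the variable `t = c²`, `S_μ(φ_c) = t‖∇φ‖²/2 - ∫ g(t s)/(8π t) + ‖φ‖²/2` with `s = 4π|φ|²`.
Since `y ↦ g(y)/y` is convex, each `t ↦ g(t s)/t` lies above its tangent at `t = 1`, and
`I_μ(φ) = 0` says precisely that the tangent of the integral term at `t = 1` has slope
`‖∇φ‖²/2`. Hence `S_μ(φ_c) ≤ S_μ(φ)`. -/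

open Set

lemma ConvexOn.add_mul_sub_le_of_hasDerivAt {S : Set ℝ} {f : ℝ → ℝ} {f' x y : ℝ}
    (hf : ConvexOn ℝ S f) (hx : x ∈ S) (hy : y ∈ S) (hf' : HasDerivAt f f' x) :
    f x + f' * (y - x) ≤ f y := by
  rcases lt_trichotomy x y with hxy | rfl | hyx
  · have := hf.le_slope_of_hasDerivAt hx hy hxy hf'
    rw [slope_def_field, le_div_iff₀ (sub_pos.2 hxy)] at this
    linarith
  · simp
  · have := hf.slope_le_of_hasDerivAt hy hx hyx hf'
    rw [slope_def_field, div_le_iff₀ (sub_pos.2 hyx)] at this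
    linarith

section ExpRemainder

variable {μ c t x y : ℝ}

def expRem (μ y : ℝ) : ℝ := exp y - 1 - y - μ * y ^ 2 / 2

lemma expRem_zero : expRem μ 0 = 0 := by simp [expRem]

lemma hasDerivAt_expRem (μ y : ℝ) : HasDerivAt (expRem μ) (exp y - 1 - μ * y) y := by
  have h := (((hasDerivAt_exp y).sub_const 1).sub (hasDerivAt_id y)).sub
    (((hasDerivAt_pow 2 y).const_mul μ).div_const 2)
  exact h.congr_deriv (by simp; ring)

lemma expRem_pos (hμ : μ ≤ 1) (hy : 0 < y) : 0 < expRem μ y := by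
  have h := sum_le_exp_of_nonneg hy.le 4
  simp only [Finset.sum_range_succ, Finset.sum_range_zero] at h
  norm_num [Nat.factorial] at h
  unfold expRem
  nlinarith [pow_pos hy 3, mul_le_mul_of_nonneg_right hμ (sq_nonneg y)]

lemma expRem_nonneg (hμ : μ ≤ 1) (hy : 0 ≤ y) : 0 ≤ expRem μ y := by
  rcases hy.eq_or_lt with rfl | hy
  · exact expRem_zero.ge
  · exact (expRem_pos hμ hy).le

lemma expRem_le_exp_sub_one (hμ : 0 ≤ μ) (hy : 0 ≤ y) : expRem μ y ≤ exp y - 1 := by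
  unfold expRem
  nlinarith [mul_nonneg hμ (sq_nonneg y)]

lemma sub_two_mul_exp_add_add_two_nonneg (hy : 0 ≤ y) : 0 ≤ (y - 2) * exp y + y + 2 := by
  have hmono : Monotone fun y => (y - 2) * exp y + y + 2 := by
    refine monotone_of_hasDerivAt_nonneg (f' := fun y => (y - 1) * exp y + 1) (fun y => ?_) ?_
    · exact ((((hasDerivAt_id y).sub_const 2).mul (hasDerivAt_exp y)).add
        (hasDerivAt_id y)).add_const 2 |>.congr_deriv (by simp; ring)
    · intro y
      -- `(y - 1) e^y + 1 = e^y (y - 1 + e^{-y})` and `e^{-y} ≥ 1 - y`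
      have h := mul_le_mul_of_nonneg_left (add_one_le_exp (-y)) (exp_pos y).le
      rw [← exp_add, add_neg_cancel, exp_zero] at h
      simp only [Pi.zero_apply]
      nlinarith
  simpa using hmono hy

lemma sq_sub_two_mul_add_two_mul_exp_sub_two_nonneg (hy : 0 ≤ y) :
    0 ≤ (y ^ 2 - 2 * y + 2) * exp y - 2 := by
  have hmono : Monotone fun y => (y ^ 2 - 2 * y + 2) * exp y - 2 := by
    refine monotone_of_hasDerivAt_nonneg (f' := fun y => y ^ 2 * exp y) (fun y => ?_)
      (fun y => by positivity)
    exact ((((hasDerivAt_pow 2 y).sub ((hasDerivAt_id y).const_mul 2)).add_const 2).mul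
      (hasDerivAt_exp y)).sub_const 2 |>.congr_deriv (by simp; ring)
  simpa using hmono hy

lemma monotoneOn_expRem_div_sq : MonotoneOn (fun y => expRem μ y / y ^ 2) (Ioi 0) := by
  have hderiv : ∀ y ∈ Ioi (0 : ℝ), HasDerivAt (fun y => expRem μ y / y ^ 2)
      (((y - 2) * exp y + y + 2) / y ^ 3) y := fun y (hy : 0 < y) =>
    ((hasDerivAt_expRem μ y).div (hasDerivAt_pow 2 y) (pow_ne_zero 2 hy.ne')).congr_deriv
      (by field_simp [hy.ne']; unfold expRem; ring)
  refine monotoneOn_of_hasDerivWithinAt_nonneg (convex_Ioi 0)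
    (f' := fun y => ((y - 2) * exp y + y + 2) / y ^ 3)
    (fun y hy => (hderiv y hy).continuousAt.continuousWithinAt) ?_ ?_
  · intro y hy
    rw [interior_Ioi] at hy
    exact (hderiv y hy).hasDerivWithinAt
  · intro y hy
    rw [interior_Ioi] at hy
    exact div_nonneg (sub_two_mul_exp_add_add_two_nonneg (le_of_lt hy)) (pow_pos hy 3).le

lemma hasDerivAt_expRem_div (hy : y ≠ 0) : HasDerivAt (fun y => expRem μ y / y)
    (((y - 1) * exp y + 1) / y ^ 2 - μ / 2) y :=
  ((hasDerivAt_expRem μ y).div (hasDerivAt_id y) hy).congr_deriv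
    (by simp only [id]; field_simp; unfold expRem; ring)

lemma convexOn_expRem_div : ConvexOn ℝ (Ioi 0) (fun y => expRem μ y / y) := by
  have hderiv2 : ∀ y ∈ Ioi (0 : ℝ), HasDerivAt (fun y => ((y - 1) * exp y + 1) / y ^ 2 - μ / 2)
      (((y ^ 2 - 2 * y + 2) * exp y - 2) / y ^ 3) y := fun y (hy : 0 < y) =>
    (((((hasDerivAt_id y).sub_const 1).mul (hasDerivAt_exp y)).add_const 1).div
      (hasDerivAt_pow 2 y) (pow_ne_zero 2 hy.ne')).sub_const _ |>.congr_deriv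
      (by simp; field_simp; ring)
  refine convexOn_of_hasDerivWithinAt2_nonneg (convex_Ioi 0)
    (f' := fun y => ((y - 1) * exp y + 1) / y ^ 2 - μ / 2)
    (f'' := fun y => ((y ^ 2 - 2 * y + 2) * exp y - 2) / y ^ 3)
    (fun y hy => (hasDerivAt_expRem_div (ne_of_gt hy)).continuousAt.continuousWithinAt)
    ?_ ?_ ?_ <;> intro y hy <;> rw [interior_Ioi] at hy
  · exact (hasDerivAt_expRem_div (ne_of_gt hy)).hasDerivWithinAt
  · exact (hderiv2 y hy).hasDerivWithinAt
  · exact div_nonneg (sq_sub_two_mul_add_two_mul_exp_sub_two_nonneg (le_of_lt hy))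
      (pow_pos hy 3).le

lemma expRem_mul_le (hc0 : 0 < c) (hc1 : c ≤ 1) (hy : 0 ≤ y) :
    expRem μ (c * y) ≤ c ^ 2 * expRem μ y := by
  rcases hy.eq_or_lt with rfl | hy
  · simp [expRem_zero]
  have h := monotoneOn_expRem_div_sq (μ := μ) (mul_pos hc0 hy) hy
    (mul_le_of_le_one_left hy.le hc1)
  rw [div_le_div_iff₀ (by positivity) (by positivity)] at h
  have : 0 < y ^ 2 := by positivity
  nlinarith

lemma le_expRem_mul (hc : 1 ≤ c) (hy : 0 ≤ y) : c ^ 2 * expRem μ y ≤ expRem μ (c * y) := by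
  rcases hy.eq_or_lt with rfl | hy
  · simp [expRem_zero]
  have h := monotoneOn_expRem_div_sq (μ := μ) hy (by positivity : 0 < c * y)
    (le_mul_of_one_le_left hy.le hc)
  rw [div_le_div_iff₀ (by positivity) (by positivity)] at h
  have : 0 < y ^ 2 := by positivity
  nlinarith

lemma expRem_add_mul_le (hx : 0 ≤ x) (ht : 0 < t) :
    expRem μ x + (t - 1) * (x * (exp x - 1 - μ * x) - expRem μ x) ≤ expRem μ (t * x) / t := by
  rcases hx.eq_or_lt with rfl | hx
  · simp [expRem_zero]
  have h := convexOn_expRem_div.add_mul_sub_le_of_hasDerivAt (f := fun y => expRem μ y / y) hx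
    (mem_Ioi.2 (mul_pos ht hx)) (hasDerivAt_expRem_div hx.ne')
  have hlhs : x * (expRem μ x / x + (((x - 1) * exp x + 1) / x ^ 2 - μ / 2) * (t * x - x))
      = expRem μ x + (t - 1) * (x * (exp x - 1 - μ * x) - expRem μ x) := by
    unfold expRem
    field_simp
    ring
  have hrhs : x * (expRem μ (t * x) / (t * x)) = expRem μ (t * x) / t := by
    field_simp
  rw [← hlhs, ← hrhs]
  exact mul_le_mul_of_nonneg_left h hx.le

end ExpRemainder

section Potential

variable {μ c : ℝ} {z : ℂ}

lemma Fmu_eq_expRem (μ : ℝ) (z : ℂ) : Fmu μ z = expRem μ (4 * π * ‖z‖ ^ 2) / (8 * π) := by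
  unfold Fmu expRem
  ring

lemma Fmu_smul (μ c : ℝ) (z : ℂ) :
    Fmu μ (c • z) = expRem μ (c ^ 2 * (4 * π * ‖z‖ ^ 2)) / (8 * π) := by
  rw [Fmu_eq_expRem, norm_smul, Real.norm_eq_abs, mul_pow, sq_abs]
  ring_nf

lemma nlDensity_sub_two_mul_Fmu (μ : ℝ) (z : ℂ) :
    nlDensity μ z - 2 * Fmu μ z = (4 * π * ‖z‖ ^ 2 * (exp (4 * π * ‖z‖ ^ 2) - 1
      - μ * (4 * π * ‖z‖ ^ 2)) - expRem μ (4 * π * ‖z‖ ^ 2)) / (4 * π) := by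
  rw [Fmu_eq_expRem]
  unfold nlDensity
  field_simp
  ring

lemma Fmu_nonneg (hμ : μ ≤ 1) (z : ℂ) : 0 ≤ Fmu μ z := by
  rw [Fmu_eq_expRem]
  exact div_nonneg (expRem_nonneg hμ (by positivity)) (by positivity)

lemma Fmu_pos (hμ : μ ≤ 1) (hz : z ≠ 0) : 0 < Fmu μ z := by
  rw [Fmu_eq_expRem]
  exact div_pos (expRem_pos hμ (by positivity)) (by positivity)

lemma Fmu_le (hμ : 0 ≤ μ) (z : ℂ) : Fmu μ z ≤ (exp (4 * π * ‖z‖ ^ 2) - 1) / (8 * π) := by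
  rw [Fmu_eq_expRem]
  gcongr
  exact expRem_le_exp_sub_one hμ (by positivity)

lemma nlDensity_nonneg (hμ : μ ≤ 1) (z : ℂ) : 0 ≤ nlDensity μ z := by
  unfold nlDensity
  have hs : 0 ≤ 4 * π * ‖z‖ ^ 2 := by positivity
  nlinarith [add_one_le_exp (4 * π * ‖z‖ ^ 2), mul_le_mul_of_nonneg_right hμ hs, sq_nonneg ‖z‖]

lemma nlDensity_le (hμ : 0 ≤ μ) (z : ℂ) :
    nlDensity μ z ≤ (exp (8 * π * ‖z‖ ^ 2) - 1) / (4 * π) := by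
  set s := 4 * π * ‖z‖ ^ 2 with hs
  have hs0 : 0 ≤ s := by positivity
  have hexp2 : exp (8 * π * ‖z‖ ^ 2) = exp s * exp s := by rw [← exp_add, hs]; ring_nf
  have hnl : nlDensity μ z = (exp s - 1 - μ * s) * s / (4 * π) := by
    unfold nlDensity
    field_simp
    rw [hs]
    ring
  rw [hnl, hexp2]
  gcongr
  -- `(e^s - 1 - μ s) s ≤ (e^s - 1)^2 ≤ e^{2s} - 1`
  nlinarith [add_one_le_exp s, one_le_exp hs0, mul_nonneg hμ (mul_nonneg hs0 hs0)]

lemma Fmu_smul_le (hc0 : 0 < c) (hc1 : c ≤ 1) (z : ℂ) : Fmu μ (c • z) ≤ c ^ 4 * Fmu μ z := by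
  rw [Fmu_smul, Fmu_eq_expRem, ← mul_div_assoc, show c ^ 4 = (c ^ 2) ^ 2 by ring]
  gcongr
  exact expRem_mul_le (by positivity) (pow_le_one₀ hc0.le hc1) (by positivity)

lemma pow_four_mul_Fmu_le (hc : 1 ≤ c) (z : ℂ) : c ^ 4 * Fmu μ z ≤ Fmu μ (c • z) := by
  rw [Fmu_smul, Fmu_eq_expRem, ← mul_div_assoc, show c ^ 4 = (c ^ 2) ^ 2 by ring]
  gcongr
  exact le_expRem_mul (one_le_pow₀ hc) (by positivity)

lemma Fmu_add_le_inv_sq_mul_Fmu_smul (hc : c ≠ 0) (z : ℂ) :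
    (c ^ 2 - 1) / 2 * (nlDensity μ z - 2 * Fmu μ z) + Fmu μ z ≤ (c ^ 2)⁻¹ * Fmu μ (c • z) := by
  have h := expRem_add_mul_le (μ := μ) (x := 4 * π * ‖z‖ ^ 2) (by positivity)
    (pow_pos (abs_pos.2 hc) 2 |>.trans_eq (sq_abs c))
  rw [nlDensity_sub_two_mul_Fmu, Fmu_smul, Fmu_eq_expRem]
  have hπ : 0 < π := pi_pos
  calc (c ^ 2 - 1) / 2 * ((4 * π * ‖z‖ ^ 2 * (exp (4 * π * ‖z‖ ^ 2) - 1
          - μ * (4 * π * ‖z‖ ^ 2)) - expRem μ (4 * π * ‖z‖ ^ 2)) / (4 * π))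
        + expRem μ (4 * π * ‖z‖ ^ 2) / (8 * π)
      = (expRem μ (4 * π * ‖z‖ ^ 2) + (c ^ 2 - 1) * (4 * π * ‖z‖ ^ 2 * (exp (4 * π * ‖z‖ ^ 2) - 1
          - μ * (4 * π * ‖z‖ ^ 2)) - expRem μ (4 * π * ‖z‖ ^ 2))) / (8 * π) := by
        field_simp
        ring
    _ ≤ expRem μ (c ^ 2 * (4 * π * ‖z‖ ^ 2)) / c ^ 2 / (8 * π) := by gcongr
    _ = (c ^ 2)⁻¹ * (expRem μ (c ^ 2 * (4 * π * ‖z‖ ^ 2)) / (8 * π)) := by ring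

end Potential

section Integrals

variable {μ : ℝ} {ψ : E2 → ℂ}

lemma continuous_Fmu (μ : ℝ) : Continuous (Fmu μ) := by
  unfold Fmu
  fun_prop

lemma continuous_nlDensity (μ : ℝ) : Continuous (nlDensity μ) := by
  unfold nlDensity
  fun_prop

lemma ExpIntegrable.const_smul (he : ExpIntegrable ψ) {c : ℝ} (hc : c ≠ 0) :
    ExpIntegrable (fun x => c • ψ x) := by
  intro a ha
  simpa only [norm_smul, Real.norm_eq_abs, mul_pow, sq_abs, ← mul_assoc] using
    he (a * c ^ 2) (by positivity)

lemma ExpIntegrable.comp_smul (he : ExpIntegrable ψ) {c : ℝ} (hc : c ≠ 0) :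
    ExpIntegrable (fun x => ψ (c • x)) :=
  fun a ha => (he a ha).comp_smul hc

lemma integrable_Fmu_comp (hμ0 : 0 ≤ μ) (hμ1 : μ ≤ 1) (hψ : AEStronglyMeasurable ψ volume)
    (he : ExpIntegrable ψ) : Integrable (fun x => Fmu μ (ψ x)) := by
  refine ((he (4 * π) (by positivity)).div_const (8 * π)).mono'
    ((continuous_Fmu μ).comp_aestronglyMeasurable hψ) (ae_of_all _ fun x => ?_)
  rw [Real.norm_of_nonneg (Fmu_nonneg hμ1 _)]
  exact Fmu_le hμ0 _

lemma integrable_nlDensity_comp (hμ0 : 0 ≤ μ) (hμ1 : μ ≤ 1)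
    (hψ : AEStronglyMeasurable ψ volume) (he : ExpIntegrable ψ) :
    Integrable (fun x => nlDensity μ (ψ x)) := by
  refine ((he (8 * π) (by positivity)).div_const (4 * π)).mono'
    ((continuous_nlDensity μ).comp_aestronglyMeasurable hψ) (ae_of_all _ fun x => ?_)
  rw [Real.norm_of_nonneg (nlDensity_nonneg hμ1 _)]
  exact nlDensity_le hμ0 _

lemma integral_Fmu_comp_pos (hμ0 : 0 ≤ μ) (hμ1 : μ ≤ 1) (hψ : AEStronglyMeasurable ψ volume)
    (he : ExpIntegrable ψ) (hnz : ¬ ψ =ᵐ[volume] 0) : 0 < ∫ x, Fmu μ (ψ x) := by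
  refine (integral_nonneg fun x => Fmu_nonneg hμ1 _).lt_of_ne fun h => hnz ?_
  filter_upwards [(integral_eq_zero_iff_of_nonneg (fun x => Fmu_nonneg hμ1 _)
    (integrable_Fmu_comp hμ0 hμ1 hψ he)).1 h.symm] with x hx
  by_contra hne
  exact (Fmu_pos hμ1 hne).ne' hx

lemma l2Sq_pos (hψ : MemLp ψ 2 volume) (hnz : ¬ ψ =ᵐ[volume] 0) : 0 < l2Sq ψ := by
  refine (integral_nonneg fun x => sq_nonneg _).lt_of_ne fun h => hnz ?_
  filter_upwards [(integral_eq_zero_iff_of_nonneg (fun x => sq_nonneg _)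
    (hψ.integrable_norm_pow two_ne_zero)).1 h.symm] with x hx
  simpa using hx

lemma continuous_integral_Fmu_smul (hμ0 : 0 ≤ μ) (hμ1 : μ ≤ 1)
    (hψ : AEStronglyMeasurable ψ volume) (he : ExpIntegrable ψ) :
    Continuous fun c : ℝ => ∫ x, Fmu μ (c • ψ x) := by
  refine continuous_iff_continuousAt.2 fun c₀ => ?_
  set M := |c₀| + 1
  have hnear : ∀ᶠ c in 𝓝 c₀, |c| < M :=
    (continuous_abs.tendsto c₀).eventually (gt_mem_nhds (lt_add_one _))
  refine continuousAt_of_dominated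
    (bound := fun x => (exp (4 * π * M ^ 2 * ‖ψ x‖ ^ 2) - 1) / (8 * π))
    (Eventually.of_forall fun c => (continuous_Fmu μ).comp_aestronglyMeasurable
      (hψ.const_smul c)) ?_ ((he _ (by positivity)).div_const _)
    (ae_of_all _ fun x =>
      ((continuous_Fmu μ).comp (continuous_id.smul continuous_const)).continuousAt)
  filter_upwards [hnear] with c hc
  refine ae_of_all _ fun x => ?_
  rw [Real.norm_of_nonneg (Fmu_nonneg hμ1 _)]
  refine (Fmu_le hμ0 _).trans ?_
  have hcM : c ^ 2 ≤ M ^ 2 := by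
    rw [← sq_abs c]
    exact pow_le_pow_left₀ (abs_nonneg c) hc.le 2
  have harg : 4 * π * ‖c • ψ x‖ ^ 2 ≤ 4 * π * M ^ 2 * ‖ψ x‖ ^ 2 := by
    rw [norm_smul, Real.norm_eq_abs, mul_pow, sq_abs, mul_assoc (4 * π)]
    gcongr
  gcongr

end Integrals

lemma exists_inv_sq_mul_eq {H : ℝ → ℝ} (hH : Continuous H) {D v : ℝ} (hD : 0 < D) (hv : 0 < v)
    (hsmall : ∀ c, 0 < c → c ≤ 1 → H c ≤ c ^ 4 * D) (hlarge : ∀ c, 1 ≤ c → c ^ 4 * D ≤ H c) :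
    ∃ c, 0 < c ∧ (c ^ 2)⁻¹ * H c = v := by
  set r := √(v / D)
  have hr : 0 < r := sqrt_pos.2 (div_pos hv hD)
  have hrD : r ^ 2 * D = v := by
    rw [sq_sqrt (div_pos hv hD).le]
    field_simp
  set a := min 1 (r / 2)
  set b := max 1 (2 * r)
  have ha : 0 < a := lt_min one_pos (half_pos hr)
  have hb : 0 < b := one_pos.trans_le (le_max_left _ _)
  have hJa : (a ^ 2)⁻¹ * H a ≤ v :=
    calc (a ^ 2)⁻¹ * H a ≤ (a ^ 2)⁻¹ * (a ^ 4 * D) := by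
          gcongr
          exact hsmall a ha (min_le_left _ _)
      _ = a ^ 2 * D := by field_simp
      _ ≤ (r / 2) ^ 2 * D := by
          gcongr
          exact min_le_right _ _
      _ ≤ v := by nlinarith
  have hJb : v ≤ (b ^ 2)⁻¹ * H b :=
    calc v ≤ (2 * r) ^ 2 * D := by nlinarith
      _ ≤ b ^ 2 * D := by
          gcongr
          exact le_max_right _ _
      _ = (b ^ 2)⁻¹ * (b ^ 4 * D) := by field_simp
      _ ≤ (b ^ 2)⁻¹ * H b := by
          gcongr
          exact hlarge b (le_max_left _ _)
  have hcont : ContinuousOn (fun c => (c ^ 2)⁻¹ * H c) (Icc a b) :=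
    ((continuousOn_id.pow 2).inv₀ fun c hc => pow_ne_zero 2 (ha.trans_le hc.1).ne').mul
      hH.continuousOn
  obtain ⟨c, hc, hcv⟩ := intermediate_value_Icc ((min_le_left _ _).trans (le_max_left _ _))
    hcont ⟨hJa, hJb⟩
  exact ⟨c, ha.trans_le hc.1, hcv⟩

lemma MeasureTheory.MemLp.two_comp_smul {E F : Type*} [NormedAddCommGroup E] [NormedSpace ℝ E]
    [MeasurableSpace E] [BorelSpace E] [FiniteDimensional ℝ E] {ν : Measure E}
    [ν.IsAddHaarMeasure] [NormedAddCommGroup F] {f : E → F} (hf : MemLp f 2 ν) {c : ℝ}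
    (hc : c ≠ 0) : MemLp (fun x => f (c • x)) 2 ν := by
  have hmeas : AEStronglyMeasurable (fun x => f (c • x)) ν :=
    hf.1.comp_quasiMeasurePreserving (Measure.quasiMeasurePreserving_smul ν hc)
  rw [memLp_two_iff_integrable_sq_norm hmeas]
  exact (hf.integrable_norm_pow two_ne_zero).comp_smul hc

lemma integral_comp_smul_E2 (f : E2 → ℝ) (c : ℝ) :
    ∫ x, f (c • x) = (c ^ 2)⁻¹ * ∫ x, f x := by
  rw [Measure.integral_comp_smul, finrank_euclideanSpace_fin, abs_of_nonneg (by positivity),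
    smul_eq_mul]

def dilate (c : ℝ) (φ : E2 → ℂ) : E2 → ℂ := fun y => c • φ (c • y)

section Dilation

variable {μ c : ℝ} {φ : E2 → ℂ}

lemma hasFDerivAt_dilate (hφ : Differentiable ℝ φ) (c : ℝ) (x : E2) :
    HasFDerivAt (dilate c φ) ((c * c) • fderiv ℝ φ (c • x)) x := by
  have h : HasFDerivAt (dilate c φ)
      (c • (fderiv ℝ φ (c • x)).comp (c • ContinuousLinearMap.id ℝ E2)) x :=
    ((hφ (c • x)).hasFDerivAt.comp x (c • ContinuousLinearMap.id ℝ E2).hasFDerivAt).const_smul c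
  refine h.congr_fderiv ?_
  ext v
  simp [smul_smul]

lemma fderiv_dilate (hφ : Differentiable ℝ φ) (c : ℝ) :
    fderiv ℝ (dilate c φ) = fun x => (c * c) • fderiv ℝ φ (c • x) :=
  funext fun x => (hasFDerivAt_dilate hφ c x).fderiv

lemma MemH1.dilate (hφ : MemH1 φ) (hc : c ≠ 0) : MemH1 (dilate c φ) :=
  ⟨(hφ.1.two_comp_smul hc).const_smul c,
    fun x => (hasFDerivAt_dilate hφ.2.1 c x).differentiableAt,
    by rw [fderiv_dilate hφ.2.1]; exact (hφ.2.2.two_comp_smul hc).const_smul (c * c)⟩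

lemma ExpIntegrable.dilate (he : ExpIntegrable φ) (hc : c ≠ 0) : ExpIntegrable (dilate c φ) :=
  (he.const_smul hc).comp_smul hc

lemma dilate_not_ae_eq_zero (hnz : ¬ φ =ᵐ[volume] 0) (hc : c ≠ 0) :
    ¬ dilate c φ =ᵐ[volume] 0 := by
  intro h
  apply hnz
  filter_upwards [(Measure.quasiMeasurePreserving_smul volume (inv_ne_zero hc)).ae_eq_comp h]
    with x hx
  simpa [dilate, smul_smul, hc] using hx

lemma l2Sq_dilate (hc : c ≠ 0) : l2Sq (dilate c φ) = l2Sq φ := by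
  simp only [l2Sq, dilate, norm_smul, Real.norm_eq_abs, mul_pow, sq_abs]
  rw [integral_const_mul, integral_comp_smul_E2 (fun y => ‖φ y‖ ^ 2)]
  field_simp

lemma gradSq_dilate (hφ : Differentiable ℝ φ) (hc : c ≠ 0) :
    gradSq (dilate c φ) = c ^ 2 * gradSq φ := by
  simp only [gradSq, fderiv_dilate hφ, norm_smul, Real.norm_eq_abs, mul_pow, abs_mul_self]
  rw [integral_const_mul, integral_comp_smul_E2 (fun y => ‖fderiv ℝ φ y‖ ^ 2)]
  field_simp

lemma integral_Fmu_dilate (μ c : ℝ) (φ : E2 → ℂ) :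
    ∫ x, Fmu μ (dilate c φ x) = (c ^ 2)⁻¹ * ∫ x, Fmu μ (c • φ x) :=
  integral_comp_smul_E2 (fun y => Fmu μ (c • φ y)) c

lemma Pmu_dilate (hc : c ≠ 0) :
    Pmu μ (dilate c φ) = l2Sq φ / 2 - (c ^ 2)⁻¹ * ∫ x, Fmu μ (c • φ x) := by
  rw [Pmu, l2Sq_dilate hc, integral_Fmu_dilate]

lemma Smu_dilate (hφ : Differentiable ℝ φ) (hc : c ≠ 0) :
    Smu μ (dilate c φ)
      = c ^ 2 * gradSq φ / 2 - (c ^ 2)⁻¹ * (∫ x, Fmu μ (c • φ x)) + l2Sq φ / 2 := by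
  rw [Smu, Emu, gradSq_dilate hφ hc, l2Sq_dilate hc, integral_Fmu_dilate]

lemma exists_Pmu_dilate_eq_zero (hμ0 : 0 ≤ μ) (hμ1 : μ ≤ 1) (hφ : MemLp φ 2 volume)
    (he : ExpIntegrable φ) (hnz : ¬ φ =ᵐ[volume] 0) :
    ∃ c, 0 < c ∧ Pmu μ (dilate c φ) = 0 := by
  have hF := integrable_Fmu_comp hμ0 hμ1 hφ.1 he
  have hFc : ∀ c : ℝ, c ≠ 0 → Integrable fun x => Fmu μ (c • φ x) := fun c hc =>
    integrable_Fmu_comp hμ0 hμ1 (hφ.1.const_smul c) (he.const_smul hc)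
  obtain ⟨c, hc, hcv⟩ := exists_inv_sq_mul_eq (continuous_integral_Fmu_smul hμ0 hμ1 hφ.1 he)
    (integral_Fmu_comp_pos hμ0 hμ1 hφ.1 he hnz) (half_pos (l2Sq_pos hφ hnz))
    (fun c hc0 hc1 => by
      rw [← integral_const_mul]
      exact integral_mono (hFc c hc0.ne') (hF.const_mul _) fun x => Fmu_smul_le hc0 hc1 _)
    (fun c hc => by
      rw [← integral_const_mul]
      exact integral_mono (hF.const_mul _) (hFc c (by positivity))
        fun x => pow_four_mul_Fmu_le hc _)
  exact ⟨c, hc, by rw [Pmu_dilate hc.ne', hcv, sub_self]⟩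

lemma Smu_dilate_le (hμ0 : 0 ≤ μ) (hμ1 : μ ≤ 1) (hφ : Differentiable ℝ φ)
    (he : ExpIntegrable φ) (hI : Imu μ φ = 0) (hc : c ≠ 0) :
    Smu μ (dilate c φ) ≤ Smu μ φ := by
  have hmeas : AEStronglyMeasurable φ volume := hφ.continuous.aestronglyMeasurable
  have hF := integrable_Fmu_comp hμ0 hμ1 hmeas he
  have hN : Integrable fun x => nlDensity μ (φ x) - 2 * Fmu μ (φ x) :=
    (integrable_nlDensity_comp hμ0 hμ1 hmeas he).sub (hF.const_mul 2)
  have hFc : Integrable fun x => Fmu μ (c • φ x) :=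
    integrable_Fmu_comp hμ0 hμ1 (hmeas.const_smul c) (he.const_smul hc)
  have hpt : ∫ x, ((c ^ 2 - 1) / 2 * (nlDensity μ (φ x) - 2 * Fmu μ (φ x)) + Fmu μ (φ x))
      ≤ ∫ x, (c ^ 2)⁻¹ * Fmu μ (c • φ x) :=
    integral_mono ((hN.const_mul _).add hF) (hFc.const_mul _)
      fun x => Fmu_add_le_inv_sq_mul_Fmu_smul hc (φ x)
  rw [integral_add (hN.const_mul _) hF, integral_const_mul, integral_const_mul] at hpt
  rw [Imu, sub_eq_zero] at hI
  rw [Smu_dilate hφ hc, Smu, Emu, hI]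
  linarith

end Dilation

theorem action_inf_over_I_zero_general (μ : ℝ) (hμ : μ = 0 ∨ μ = 1)
    (Q : E2 → ℂ) (hQ : IsGroundState μ Q)
    (hIQ : Imu μ Q = 0)
    (hPchar : IsLeast {s : ℝ | ∃ φ : E2 → ℂ, MemH1 φ ∧ ExpIntegrable φ ∧
        ¬ φ =ᵐ[volume] (0 : E2 → ℂ) ∧ Pmu μ φ = 0 ∧ s = Smu μ φ} (Smu μ Q)) :
    IsLeast {s : ℝ | ∃ φ : E2 → ℂ, MemH1 φ ∧ ExpIntegrable φ ∧
        ¬ φ =ᵐ[volume] (0 : E2 → ℂ) ∧ Imu μ φ = 0 ∧ s = Smu μ φ} (Smu μ Q) := by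
  have hμ0 : 0 ≤ μ := by rcases hμ with rfl | rfl <;> norm_num
  have hμ1 : μ ≤ 1 := by rcases hμ with rfl | rfl <;> norm_num
  refine ⟨⟨Q, hQ.mem, hQ.expint, hQ.nonzero, hIQ, rfl⟩, ?_⟩
  rintro _ ⟨φ, hφ, he, hnz, hI, rfl⟩
  obtain ⟨c, hc, hP⟩ := exists_Pmu_dilate_eq_zero hμ0 hμ1 hφ.1 he hnz
  calc Smu μ Q ≤ Smu μ (dilate c φ) :=
        hPchar.2 ⟨_, hφ.dilate hc.ne', he.dilate hc.ne', dilate_not_ae_eq_zero hnz hc.ne', hP, rfl⟩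
    _ ≤ Smu μ φ := Smu_dilate_le hμ0 hμ1 hφ.2.1 he hI hc.ne'

/-- the variational characterization
`S_μ(Q_μ) = inf { S_μ(φ) : φ ∈ H¹∖{0}, I_μ(φ) = 0 }` (the infimum being attained at `Q_μ`). -/
theorem action_inf_over_I_zero (μ : ℝ) (hμ : μ = 0 ∨ μ = 1)
    (Q : E2 → ℂ) (hQ : IsGroundState μ Q)
    (hSQ : Smu μ Q = gradSq Q / 2) (hPQ : Pmu μ Q = 0) (hIQ : Imu μ Q = 0)
    (hPchar : IsLeast {s : ℝ | ∃ φ : E2 → ℂ, MemH1 φ ∧ ExpIntegrable φ ∧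
        ¬ φ =ᵐ[volume] (0 : E2 → ℂ) ∧ Pmu μ φ = 0 ∧ s = Smu μ φ} (Smu μ Q)) :
    IsLeast {s : ℝ | ∃ φ : E2 → ℂ, MemH1 φ ∧ ExpIntegrable φ ∧
        ¬ φ =ᵐ[volume] (0 : E2 → ℂ) ∧ Imu μ φ = 0 ∧ s = Smu μ φ} (Smu μ Q) :=
  action_inf_over_I_zero_general μ hμ Q hQ hIQ hPchar
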